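/- For every integer n ≥ 1, every tuple of entire functions f_0, …, f_n : ℂ → ℂ with no common zero, every ε > 0 and every N > 0, there exist polynomials p_0, p_1, …, p_n whose coefficients all lie in the field of Gaussian rationals ℚ(i) = {x + iy : x, y ∈ ℚ}, such that: (i) for every z with |z| ≤ N, the vector (p_0(z),…,p_n(z)) is nonzero and d_FS((p_0(z),…,p_n(z)), (f_0(z),…,f_n(z))) < ε; and (ii) deg p_0 > deg p_j for every j ∈ {1,…,n}. -/

import Mathlib

/-!
Each `fᵢ` is uniformly approximated on `‖z‖ ≤ N` by a Taylor polynomial, whose coefficients are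
then rounded to Gaussian rationals. Adding a tiny rational multiple of a high power `X ^ M` to
`p₀` forces `deg p₀ > deg pⱼ` while changing its values on the disc arbitrarily little. Since
`|f(z)|` is bounded below by some `μ > 0` on the compact disc, the Fubini–Study distance is
controlled by the coordinatewise errors through `d_FS(a, b) ≤ 2 |a - b| / |a|`.
-/

noncomputable def hermNorm {m : ℕ} (a : Fin m → ℂ) : ℝ :=
  Real.sqrt (∑ i, ‖a i‖ ^ 2)

/-- The Fubini–Study (chordal) distance between two points of `ℂP^{m-1}` given by
nonzero homogeneous-coordinate vectors in `ℂ^m`. -/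
noncomputable def dFS {m : ℕ} (a b : Fin m → ℂ) : ℝ :=
  Real.sqrt (∑ i, ∑ j, if i < j then ‖a i * b j - a j * b i‖ ^ 2 else 0)
    / (hermNorm a * hermNorm b)

def IsGaussianRational (c : ℂ) : Prop := ∃ x y : ℚ, c = (x : ℂ) + (y : ℂ) * Complex.I

open Polynomial

namespace IsGaussianRational

lemma zero : IsGaussianRational 0 := ⟨0, 0, by simp⟩

lemma ratCast (q : ℚ) : IsGaussianRational q := ⟨q, 0, by simp⟩

lemma add {a b : ℂ} (ha : IsGaussianRational a) (hb : IsGaussianRational b) :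
    IsGaussianRational (a + b) := by
  obtain ⟨x, y, rfl⟩ := ha
  obtain ⟨x', y', rfl⟩ := hb
  exact ⟨x + x', y + y', by push_cast; ring⟩

lemma exists_norm_sub_lt (c : ℂ) {η : ℝ} (hη : 0 < η) :
    ∃ r : ℂ, IsGaussianRational r ∧ ‖r - c‖ < η := by
  obtain ⟨x, hx⟩ := exists_rat_near c.re (half_pos hη)
  obtain ⟨y, hy⟩ := exists_rat_near c.im (half_pos hη)
  refine ⟨x + y * Complex.I, ⟨x, y, rfl⟩, ?_⟩
  calc ‖(x + y * Complex.I : ℂ) - c‖ ≤ |(x : ℝ) - c.re| + |(y : ℝ) - c.im| := by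
        simpa using Complex.norm_le_abs_re_add_abs_im ((x + y * Complex.I : ℂ) - c)
    _ < η / 2 + η / 2 := by
        rw [abs_sub_comm _ c.re, abs_sub_comm _ c.im]
        exact add_lt_add hx hy
    _ = η := add_halves η

end IsGaussianRational

theorem Differentiable.exists_polynomial_norm_sub_lt {g : ℂ → ℂ} (hg : Differentiable ℂ g)
    (N : ℝ) {δ : ℝ} (hδ : 0 < δ) :
    ∃ q : ℂ[X], ∀ z : ℂ, ‖z‖ ≤ N → ‖q.eval z - g z‖ < δ := by
  have hP : HasFPowerSeriesOnBall g (cauchyPowerSeries g 0 1) 0 ⊤ :=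
    hg.hasFPowerSeriesOnBall (0 : ℂ) (R := 1) zero_lt_one
  obtain ⟨m, hm⟩ := (Metric.tendstoUniformlyOn_iff.1
    (hP.tendstoUniformlyOn' (r' := N.toNNReal + 1) ENNReal.coe_lt_top) δ hδ).exists
  refine ⟨∑ k ∈ Finset.range m, C ((cauchyPowerSeries g 0 1).coeff k) * X ^ k,
    fun z hz => ?_⟩
  have hz' : z ∈ Metric.ball (0 : ℂ) (N.toNNReal + 1 : NNReal) := by
    rw [mem_ball_zero_iff]
    push_cast
    linarith [Real.le_coe_toNNReal N]
  have heval : (∑ k ∈ Finset.range m, C ((cauchyPowerSeries g 0 1).coeff k) * X ^ k).eval z =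
      (cauchyPowerSeries g 0 1).partialSum m (z - 0) := by
    rw [eval_finsetSum, FormalMultilinearSeries.partialSum, sub_zero]
    refine Finset.sum_congr rfl fun k _ => ?_
    rw [eval_mul, eval_C, eval_pow, eval_X, FormalMultilinearSeries.apply_eq_pow_smul_coeff,
      smul_eq_mul, mul_comm]
  rw [heval, ← dist_eq_norm, dist_comm]
  exact hm z hz'

theorem Polynomial.exists_gaussianRational_norm_sub_lt (q : ℂ[X]) (N : ℝ) {δ : ℝ}
    (hδ : 0 < δ) :
    ∃ r : ℂ[X], (∀ k, IsGaussianRational (r.coeff k)) ∧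
      ∀ z : ℂ, ‖z‖ ≤ N → ‖r.eval z - q.eval z‖ < δ := by
  set d := q.natDegree + 1
  set S : ℝ := ∑ k ∈ Finset.range d, (|N| + 1) ^ k
  have hS : 0 < S := by positivity
  choose r hr hrq using fun k => IsGaussianRational.exists_norm_sub_lt (q.coeff k)
    (show 0 < δ / (2 * S) by positivity)
  refine ⟨∑ k ∈ Finset.range d, C (r k) * X ^ k, fun k => ?_, fun z hz => ?_⟩
  · simp only [finsetSum_coeff, coeff_C_mul_X_pow, Finset.sum_ite_eq, Finset.mem_range]
    split_ifs
    exacts [hr k, .zero]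
  have hz : ‖z‖ ≤ |N| + 1 := by linarith [le_abs_self N]
  rw [eval_finsetSum, eval_eq_sum_range z, ← Finset.sum_sub_distrib]
  calc ‖∑ k ∈ Finset.range d, ((C (r k) * X ^ k).eval z - q.coeff k * z ^ k)‖
      ≤ ∑ k ∈ Finset.range d, ‖r k - q.coeff k‖ * ‖z‖ ^ k := by
        refine norm_sum_le_of_le _ fun k _ => ?_
        simp [← sub_mul]
    _ ≤ ∑ k ∈ Finset.range d, δ / (2 * S) * (|N| + 1) ^ k := by
        gcongr with k
        exact (hrq k).le
    _ = δ / (2 * S) * S := by rw [← Finset.mul_sum]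
    _ = δ / 2 := by field_simp
    _ < δ := half_lt_self hδ

theorem Differentiable.exists_gaussianRational_norm_sub_lt {g : ℂ → ℂ}
    (hg : Differentiable ℂ g) (N : ℝ) {δ : ℝ} (hδ : 0 < δ) :
    ∃ r : ℂ[X], (∀ k, IsGaussianRational (r.coeff k)) ∧
      ∀ z : ℂ, ‖z‖ ≤ N → ‖r.eval z - g z‖ < δ := by
  obtain ⟨q, hq⟩ := hg.exists_polynomial_norm_sub_lt N (half_pos hδ)
  obtain ⟨r, hr, hrq⟩ := q.exists_gaussianRational_norm_sub_lt N (half_pos hδ)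
  refine ⟨r, hr, fun z hz => ?_⟩
  calc ‖r.eval z - g z‖ ≤ ‖r.eval z - q.eval z‖ + ‖q.eval z - g z‖ :=
        norm_sub_le_norm_sub_add_norm_sub _ _ _
    _ < δ / 2 + δ / 2 := add_lt_add (hrq z hz) (hq z hz)
    _ = δ := add_halves δ

theorem Polynomial.exists_gaussianRational_degree_eq_norm_sub_lt {q : ℂ[X]}
    (hq : ∀ k, IsGaussianRational (q.coeff k)) {M : ℕ} (hM : q.natDegree < M) (N : ℝ) {δ : ℝ}
    (hδ : 0 < δ) :
    ∃ r : ℂ[X], (∀ k, IsGaussianRational (r.coeff k)) ∧ r.degree = M ∧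
      ∀ z : ℂ, ‖z‖ ≤ N → ‖r.eval z - q.eval z‖ < δ := by
  obtain ⟨ρ, hρ, hρδ⟩ := exists_rat_btwn (show (0 : ℝ) < δ / (|N| ^ M + 1) by positivity)
  have hρ' : (0 : ℝ) < ρ := by exact_mod_cast hρ
  refine ⟨q + C (ρ : ℂ) * X ^ M, fun k => ?_, ?_, fun z hz => ?_⟩
  · rw [coeff_add, coeff_C_mul_X_pow]
    split_ifs
    exacts [(hq k).add (.ratCast ρ), by simpa using hq k]
  · have hdeg : (C (ρ : ℂ) * X ^ M).degree = (M : WithBot ℕ) :=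
      degree_C_mul_X_pow M (by exact_mod_cast hρ.ne')
    rw [degree_add_eq_right_of_degree_lt, hdeg]
    exact hdeg ▸ degree_le_natDegree.trans_lt (by exact_mod_cast hM)
  · have hzM : ‖z‖ ^ M ≤ |N| ^ M := by gcongr; exact hz.trans (le_abs_self N)
    have hρN : (ρ : ℝ) * (|N| ^ M + 1) < δ := (lt_div_iff₀ (by positivity)).1 hρδ
    calc ‖(q + C (ρ : ℂ) * X ^ M).eval z - q.eval z‖ = ρ * ‖z‖ ^ M := by
          simp [abs_of_pos hρ']
      _ ≤ ρ * |N| ^ M := by gcongr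
      _ < δ := by linarith

theorem exists_gaussianRational_approx_of_differentiable {ι : Type*} [Fintype ι]
    [DecidableEq ι] {f : ι → ℂ → ℂ} (hf : ∀ i, Differentiable ℂ (f i)) (i₀ : ι) (N : ℝ)
    {δ : ℝ} (hδ : 0 < δ) :
    ∃ p : ι → ℂ[X], (∀ i k, IsGaussianRational ((p i).coeff k)) ∧
      (∀ i z, ‖z‖ ≤ N → ‖(p i).eval z - f i z‖ < δ) ∧
      ∀ j, j ≠ i₀ → (p j).degree < (p i₀).degree := by
  choose q hq hqf using fun i => (hf i).exists_gaussianRational_norm_sub_lt N (half_pos hδ)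
  set M := (Finset.univ.sup fun i => (q i).natDegree) + 1
  have hqM : ∀ i, (q i).natDegree < M := fun i =>
    Nat.lt_succ_of_le (Finset.le_sup (f := fun i => (q i).natDegree) (Finset.mem_univ i))
  obtain ⟨r, hr, hrM, hrq⟩ :=
    exists_gaussianRational_degree_eq_norm_sub_lt (hq i₀) (hqM i₀) N (half_pos hδ)
  refine ⟨Function.update q i₀ r, fun i k => ?_, fun i z hz => ?_, fun j hj => ?_⟩
  · rcases eq_or_ne i i₀ with rfl | hi
    · simpa using hr k
    · simpa [hi] using hq i k
  · rcases eq_or_ne i i₀ with rfl | hi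
    · calc ‖(Function.update q i r i).eval z - f i z‖
          ≤ ‖r.eval z - (q i).eval z‖ + ‖(q i).eval z - f i z‖ := by
            simpa using norm_sub_le_norm_sub_add_norm_sub (r.eval z) ((q i).eval z) (f i z)
        _ < δ / 2 + δ / 2 := add_lt_add (hrq z hz) (hqf i z hz)
        _ = δ := add_halves δ
    · simpa [hi] using (hqf i z hz).trans (half_lt_self hδ)
  · rw [Function.update_of_ne hj, Function.update_self, hrM]
    exact degree_le_natDegree.trans_lt (by exact_mod_cast hqM j)

section FubiniStudy

variable {m : ℕ}

lemma hermNorm_eq_norm_toLp (a : Fin m → ℂ) : hermNorm a = ‖WithLp.toLp 2 a‖ := by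
  simp [hermNorm, EuclideanSpace.norm_eq]

lemma hermNorm_nonneg (a : Fin m → ℂ) : 0 ≤ hermNorm a := Real.sqrt_nonneg _

lemma hermNorm_sq (a : Fin m → ℂ) : hermNorm a ^ 2 = ∑ i, ‖a i‖ ^ 2 :=
  Real.sq_sqrt (by positivity)

lemma continuous_hermNorm : Continuous (hermNorm : (Fin m → ℂ) → ℝ) := by
  unfold hermNorm
  fun_prop

lemma hermNorm_pos {a : Fin m → ℂ} (ha : ∃ i, a i ≠ 0) : 0 < hermNorm a := by
  rw [hermNorm_eq_norm_toLp, norm_pos_iff, Ne, WithLp.toLp_eq_zero, funext_iff]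
  simpa using ha

lemma exists_ne_zero_of_hermNorm_pos {a : Fin m → ℂ} (ha : 0 < hermNorm a) :
    ∃ i, a i ≠ 0 := by
  rw [hermNorm_eq_norm_toLp, norm_pos_iff, Ne, WithLp.toLp_eq_zero, funext_iff] at ha
  simpa using ha

lemma hermNorm_le_sum_norm (a : Fin m → ℂ) : hermNorm a ≤ ∑ i, ‖a i‖ :=
  Real.sqrt_le_iff.2 ⟨by positivity,
    Finset.sum_sq_le_sq_sum_of_nonneg fun i _ => norm_nonneg (a i)⟩

lemma hermNorm_le_add_hermNorm_sub (a b : Fin m → ℂ) :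
    hermNorm b ≤ hermNorm a + hermNorm (a - b) := by
  simp only [hermNorm_eq_norm_toLp, WithLp.toLp_sub]
  exact norm_le_norm_add_norm_sub _ _

lemma sum_sq_norm_wedge_le (a b : Fin m → ℂ) :
    (∑ i, ∑ j, if i < j then ‖a i * b j - a j * b i‖ ^ 2 else 0)
      ≤ (2 * hermNorm (a - b) * hermNorm b) ^ 2 := by
  set d := a - b
  have hterm : ∀ i j, (if i < j then ‖a i * b j - a j * b i‖ ^ 2 else 0)
      ≤ 2 * (‖d i‖ ^ 2 * ‖b j‖ ^ 2 + ‖d j‖ ^ 2 * ‖b i‖ ^ 2) := by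
    intro i j
    have hwedge : ‖a i * b j - a j * b i‖ ≤ ‖d i‖ * ‖b j‖ + ‖d j‖ * ‖b i‖ := by
      rw [← norm_mul, ← norm_mul, show a i * b j - a j * b i = d i * b j - d j * b i by
        simp only [d, Pi.sub_apply]; ring]
      exact norm_sub_le _ _
    split_ifs
    · nlinarith [norm_nonneg (a i * b j - a j * b i),
        sq_nonneg (‖d i‖ * ‖b j‖ - ‖d j‖ * ‖b i‖)]
    · positivity
  calc _ ≤ ∑ i, ∑ j, 2 * (‖d i‖ ^ 2 * ‖b j‖ ^ 2 + ‖d j‖ ^ 2 * ‖b i‖ ^ 2) := by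
        gcongr with i _ j _
        exact hterm i j
    _ = 4 * (∑ i, ‖d i‖ ^ 2) * ∑ i, ‖b i‖ ^ 2 := by
        simp only [mul_add, Finset.sum_add_distrib, ← Finset.mul_sum, ← Finset.sum_mul]
        ring
    _ = (2 * hermNorm d * hermNorm b) ^ 2 := by
        rw [mul_pow, mul_pow, hermNorm_sq, hermNorm_sq]
        ring

-- If `a = 0` or `b = 0`, the left side is `0` by division by zero.
lemma dFS_le (a b : Fin m → ℂ) : dFS a b ≤ 2 * hermNorm (a - b) / hermNorm a := by
  have hnum : 0 ≤ 2 * hermNorm (a - b) := mul_nonneg zero_le_two (hermNorm_nonneg _)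
  rcases (hermNorm_nonneg b).eq_or_lt with hb | hb
  · rw [dFS, ← hb, mul_zero, div_zero]
    exact div_nonneg hnum (hermNorm_nonneg a)
  calc dFS a b ≤ 2 * hermNorm (a - b) * hermNorm b / (hermNorm a * hermNorm b) := by
        refine div_le_div_of_nonneg_right ?_ (mul_nonneg (hermNorm_nonneg a) hb.le)
        exact Real.sqrt_le_iff.2 ⟨mul_nonneg hnum hb.le, sum_sq_norm_wedge_le a b⟩
    _ = 2 * hermNorm (a - b) / hermNorm a := mul_div_mul_right _ _ hb.ne'

lemma dFS_lt_of_hermNorm_sub_lt {a b : Fin m → ℂ} {μ ε : ℝ} (hb : μ ≤ hermNorm b)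
    (hab : hermNorm (a - b) < min (μ / 2) (ε * μ / 4)) : (∃ i, a i ≠ 0) ∧ dFS a b < ε := by
  have hd := hermNorm_nonneg (a - b)
  have ha : μ / 2 < hermNorm a := by
    linarith [hermNorm_le_add_hermNorm_sub a b, min_le_left (μ / 2) (ε * μ / 4)]
  have hμ : 0 < μ := by linarith [lt_of_le_of_lt hd (hab.trans_le (min_le_left _ _))]
  refine ⟨exists_ne_zero_of_hermNorm_pos (by linarith), ?_⟩
  calc dFS a b ≤ 2 * hermNorm (a - b) / hermNorm a := dFS_le a b
    _ ≤ 2 * hermNorm (a - b) / (μ / 2) := by gcongr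
    _ < ε := by
        rw [div_lt_iff₀ (by positivity)]
        linarith [min_le_right (μ / 2) (ε * μ / 4)]

end FubiniStudy

theorem stmt3_general (n : ℕ) (f : Fin (n + 1) → ℂ → ℂ)
    (hf : ∀ i, Differentiable ℂ (f i)) (hnc : ∀ z : ℂ, ∃ i, f i z ≠ 0)
    (ε N : ℝ) (hε : 0 < ε) :
    ∃ p : Fin (n + 1) → Polynomial ℂ,
      (∀ i : Fin (n + 1), ∀ k : ℕ, IsGaussianRational ((p i).coeff k)) ∧
      (∀ z : ℂ, ‖z‖ ≤ N →
        (∃ i, (p i).eval z ≠ 0) ∧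
        dFS (fun i => (p i).eval z) (fun i => f i z) < ε) ∧
      (∀ j : Fin (n + 1), j ≠ 0 → (p j).degree < (p 0).degree) := by
  obtain ⟨μ, hμ, hμf⟩ := (isCompact_closedBall (0 : ℂ) N).exists_forall_le'
    (continuous_hermNorm.comp (continuous_pi fun i => (hf i).continuous)).continuousOn
    fun z _ => hermNorm_pos (hnc z)
  set η := min (μ / 2) (ε * μ / 4)
  have hη : 0 < η := lt_min (by positivity) (by positivity)
  obtain ⟨p, hp, hpf, hdeg⟩ :=
    exists_gaussianRational_approx_of_differentiable hf 0 N (δ := η / (n + 1)) (by positivity)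
  refine ⟨p, hp, fun z hz =>
    dFS_lt_of_hermNorm_sub_lt (hμf z (mem_closedBall_zero_iff.2 hz)) ?_, hdeg⟩
  calc hermNorm ((fun i => (p i).eval z) - fun i => f i z)
      ≤ ∑ i, ‖(p i).eval z - f i z‖ := hermNorm_le_sum_norm _
    _ < ∑ _i : Fin (n + 1), η / (n + 1) :=
        Finset.sum_lt_sum_of_nonempty Finset.univ_nonempty fun i _ => hpf i z hz
    _ = η := by
        rw [Finset.sum_const, Finset.card_univ, Fintype.card_fin, nsmul_eq_mul]
        push_cast
        field_simp

/-- Runge-type approximation for entire curves, with Gaussian rational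
coefficients. Any entire curve `[f₀ : ⋯ : fₙ] : ℂ → ℂP^n` can be approximated on
`{|z| ≤ N}`, in the Fubini–Study distance, by a rational curve `[p₀ : ⋯ : pₙ]` whose
polynomials have all coefficients in `ℚ(i)` and satisfy `deg p₀ > deg p_j`, `j ≠ 0`. -/
theorem stmt3 (n : ℕ) (hn : 1 ≤ n) (f : Fin (n + 1) → ℂ → ℂ)
    (hf : ∀ i, Differentiable ℂ (f i)) (hnc : ∀ z : ℂ, ∃ i, f i z ≠ 0)
    (ε N : ℝ) (hε : 0 < ε) (hN : 0 < N) :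
    ∃ p : Fin (n + 1) → Polynomial ℂ,
      (∀ i : Fin (n + 1), ∀ k : ℕ, IsGaussianRational ((p i).coeff k)) ∧
      (∀ z : ℂ, ‖z‖ ≤ N →
        (∃ i, (p i).eval z ≠ 0) ∧
        dFS (fun i => (p i).eval z) (fun i => f i z) < ε) ∧
      (∀ j : Fin (n + 1), j ≠ 0 → (p j).degree < (p 0).degree) :=
  stmt3_general n f hf hnc ε N hε
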